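/- arXiv:2006.09594 — 3 statements merged into one kernel-verified Lean document; each statement's English description precedes it below -/
import Mathlib

section
/- Let m∈{2,3} and let n satisfy (Cond-n). Let 0<ε<T<∞, s∈ℝ and s₁>0. Then there exists a constant c₁>0, depending on s, s₁, ε, T, η, m, n, σ, c₀ and p, such that for all t₁, t₂ ∈ [ε,T] and every measurable g:ℝ→ℂ: ∫_ℝ (1+|ξ|²)^{s+s₁} · |exp((−ip(ξ)ξ+φ_{m,n}(ξ))t₁) − exp((−ip(ξ)ξ+φ_{m,n}(ξ))t₂)|² · |g(ξ)|² dξ ≤ c₁·|t₁−t₂|·∫_ℝ (1+|ξ|²)^{s} |g(ξ)|² dξ. (This is the frequency-side form of the estimate ‖K_{m,n}(t₁,·)∗ψ − K_{m,n}(t₂,·)∗ψ‖_{H^{s+s₁}} ≤ c₁|t₁−t₂|^{1/2}‖ψ‖_{H^s}.) -/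
open MeasureTheory

/-- The dissipative symbol `φ_{m,n}(ξ) = −η(i^{n+1}|ξ|ξ^{n−1} + |ξ|^m)`. -/
noncomputable def phi (η : ℝ) (m n : ℕ) (ξ : ℝ) : ℂ :=
  -(η : ℂ) * (Complex.I ^ (n + 1) * ((|ξ| : ℝ) : ℂ) * (ξ : ℂ) ^ (n - 1)
    + ((|ξ| : ℝ) : ℂ) ^ m)

/-- The kernel `K_{m,n}(t,x) = ∫_ℝ e^{2πixξ} e^{−ip(ξ)ξt+φ_{m,n}(ξ)t} dξ`. -/
noncomputable def Ker (η : ℝ) (m n : ℕ) (p : ℝ → ℝ) (t x : ℝ) : ℂ :=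
  ∫ ξ : ℝ, Complex.exp (2 * (Real.pi : ℂ) * Complex.I * (x : ℂ) * (ξ : ℂ)) *
    Complex.exp (-Complex.I * (p ξ : ℂ) * (ξ : ℂ) * (t : ℂ) + phi η m n ξ * (t : ℂ))

/-- The parameter `α`: `α = 1/m` if `n = 1` or `n` is even, and `α = 1/n` if `n ≥ 3` is odd. -/
noncomputable def alph (m n : ℕ) : ℝ :=
  if n = 1 ∨ Even n then 1 / (m : ℝ) else 1 / (n : ℝ)

lemma phi_eq (η : ℝ) (m n : ℕ) (ξ : ℝ) :
    phi η m n ξ = -(η : ℂ) * (Complex.I ^ (n+1) * ((|ξ| * ξ ^ (n-1) : ℝ) : ℂ)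
      + ((|ξ|^m : ℝ) : ℂ)) := by
  unfold phi; push_cast; ring

lemma phi_re (η : ℝ) (m n : ℕ) (ξ : ℝ) :
    (phi η m n ξ).re = -η * ((Complex.I ^ (n+1)).re * (|ξ| * ξ ^ (n-1)) + |ξ| ^ m) := by
  rw [phi_eq]
  simp only [Complex.neg_re, Complex.mul_re, Complex.add_re, Complex.add_im, Complex.mul_im,
    Complex.ofReal_re, Complex.ofReal_im, Complex.neg_im]
  ring

lemma phi_re_le (η : ℝ) (hη : 0 ≤ η) (m n : ℕ) (hn : 1 ≤ n)
    (hCond : ∀ d : ℕ, n ≠ 5 + 4 * d) (ξ : ℝ) :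
    (phi η m n ξ).re ≤ η * |ξ| - η * |ξ| ^ m := by
  have h4 : n % 4 < 4 := Nat.mod_lt _ (by norm_num)
  have hz : n = 4 * (n / 4) + n % 4 := (Nat.div_add_mod n 4).symm
  have hIpow : Complex.I ^ (n+1) = Complex.I ^ (n % 4 + 1) := by
    conv_lhs => rw [hz]
    rw [add_assoc, pow_add, pow_mul, Complex.I_pow_four, one_pow, one_mul]
  rw [phi_re, hIpow]
  have habs : (0:ℝ) ≤ |ξ| := abs_nonneg _
  have hcases : n % 4 = 0 ∨ n % 4 = 1 ∨ n % 4 = 2 ∨ n % 4 = 3 := by omega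
  rcases hcases with h | h | h | h
  · rw [h]; simp; nlinarith
  · have hn1 : n = 1 := by
      by_contra hne
      exact hCond (n / 4 - 1) (by omega)
    subst hn1
    norm_num [Complex.I_sq]
    nlinarith
  · rw [h]
    have hI3 : Complex.I ^ (2+1) = -Complex.I := by
      rw [pow_succ, Complex.I_sq]; ring
    rw [hI3]; simp; nlinarith
  · rw [h, Complex.I_pow_four]
    have heven : Even (n - 1) := ⟨(n-1)/2, by omega⟩
    have hx : (0:ℝ) ≤ ξ ^ (n-1) := heven.pow_nonneg ξ
    simp only [Complex.one_re]
    nlinarith [mul_nonneg (mul_nonneg hη habs) hx]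

lemma phi_abs_le (η : ℝ) (hη : 0 ≤ η) (m n : ℕ) (hn : 1 ≤ n) (ξ : ℝ) :
    ‖phi η m n ξ‖ ≤ η * (|ξ| ^ n + |ξ| ^ m) := by
  rw [phi_eq, norm_mul]
  have h1 : ‖-(η:ℂ)‖ = η := by
    rw [norm_neg, Complex.norm_real, Real.norm_eq_abs, abs_of_nonneg hη]
  rw [h1]
  have h2 : ‖Complex.I ^ (n+1) * ((|ξ| * ξ ^ (n-1) : ℝ) : ℂ)
      + ((|ξ|^m : ℝ) : ℂ)‖ ≤ |ξ| ^ n + |ξ| ^ m := by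
    refine le_trans (norm_add_le _ _) ?_
    rw [norm_mul, norm_pow, Complex.norm_I, one_pow, one_mul, Complex.norm_real, Real.norm_eq_abs,
      Complex.norm_real, Real.norm_eq_abs]
    have : |(|ξ| * ξ ^ (n-1))| = |ξ| ^ n := by
      rw [abs_mul, abs_abs, abs_pow]
      rw [← pow_succ']
      congr 1
      omega
    rw [this]
    rw [abs_of_nonneg (by positivity : (0:ℝ) ≤ |ξ|^m)]
  exact mul_le_mul_of_nonneg_left h2 hη

lemma aux_pow_exp (k : ℕ) (hk : 1 ≤ k) (x : ℝ) (hx : 0 ≤ x) :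
    x ^ k * Real.exp (-x) ≤ (k : ℝ) ^ k := by
  have hk0 : (0:ℝ) < k := by exact_mod_cast hk
  have h1 : x ≤ (k:ℝ) * Real.exp (x / k) := by
    have h := Real.add_one_le_exp (x / k)
    have : x / k ≤ Real.exp (x / k) := by linarith [div_nonneg hx hk0.le]
    calc x = (k:ℝ) * (x / k) := by field_simp
    _ ≤ (k:ℝ) * Real.exp (x / k) := by
        exact mul_le_mul_of_nonneg_left this hk0.le
  have h2 : x ^ k ≤ ((k:ℝ) * Real.exp (x / k)) ^ k := pow_le_pow_left₀ hx h1 k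
  have h3 : ((k:ℝ) * Real.exp (x / k)) ^ k = (k:ℝ)^k * Real.exp x := by
    rw [mul_pow, ← Real.exp_nat_mul]
    congr 1
    field_simp
  have h4 : x ^ k * Real.exp (-x) ≤ (k:ℝ)^k * Real.exp x * Real.exp (-x) := by
    exact mul_le_mul_of_nonneg_right (h3 ▸ h2) (Real.exp_pos _).le
  calc x ^ k * Real.exp (-x) ≤ (k:ℝ)^k * Real.exp x * Real.exp (-x) := h4
  _ = (k:ℝ)^k := by rw [mul_assoc, ← Real.exp_add]; simp

lemma exp_diff_le (w : ℂ) (t₁ t₂ M : ℝ) (hM : 0 < M)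
    (h1 : ‖Complex.exp (w * t₁)‖ ≤ M)
    (h2 : ‖Complex.exp (w * t₂)‖ ≤ M) :
    ‖Complex.exp (w * t₁) - Complex.exp (w * t₂)‖ ≤
      2 * M * (‖w‖ * |t₁ - t₂|) := by
  have hDnn : 0 ≤ ‖w‖ * |t₁ - t₂| := mul_nonneg (norm_nonneg _) (abs_nonneg _)
  rcases le_or_gt (‖w‖ * |t₁ - t₂|) 1 with hle | hgt
  · have key : Complex.exp (w * t₁) - Complex.exp (w * t₂)
        = Complex.exp (w * t₂) * (Complex.exp (w * ((t₁ - t₂ : ℝ) : ℂ)) - 1) := by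
      rw [mul_sub, mul_one, ← Complex.exp_add]
      congr 2
      push_cast; ring
    rw [key, norm_mul]
    have habs : ‖w * ((t₁ - t₂ : ℝ) : ℂ)‖ = ‖w‖ * |t₁ - t₂| := by
      rw [norm_mul, Complex.norm_real, Real.norm_eq_abs]
    have h3 : ‖Complex.exp (w * ((t₁ - t₂ : ℝ) : ℂ)) - 1‖
        ≤ 2 * (‖w‖ * |t₁ - t₂|) := by
      have := Complex.norm_exp_sub_one_le (x := w * ((t₁ - t₂ : ℝ) : ℂ)) (by rw [habs]; exact hle)
      rwa [habs] at this
    calc ‖Complex.exp (w * t₂)‖ * ‖Complex.exp (w * ((t₁ - t₂:ℝ):ℂ)) - 1‖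
        ≤ M * (2 * (‖w‖ * |t₁ - t₂|)) := by
          exact mul_le_mul h2 h3 (norm_nonneg _) hM.le
      _ = 2 * M * (‖w‖ * |t₁ - t₂|) := by ring
  · calc ‖Complex.exp (w * t₁) - Complex.exp (w * t₂)‖
        ≤ ‖Complex.exp (w * t₁)‖ + ‖Complex.exp (w * t₂)‖ :=
          norm_sub_le _ _
      _ ≤ 2 * M := by linarith
      _ ≤ 2 * M * (‖w‖ * |t₁ - t₂|) := by nlinarith

lemma lin_bound (a c : ℝ) (ha : 0 ≤ a) (hc : 0 < c) (m : ℕ) (hm : m = 2 ∨ m = 3)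
    (y : ℝ) (hy : 0 ≤ y) :
    a * y - c * y ^ m ≤ (a + 1) + (a + 1)^2 / (4 * c) - y := by
  have hb : (0:ℝ) < a + 1 := by linarith
  have hdiv : (0:ℝ) ≤ (a+1)^2 / (4*c) := by positivity
  rcases le_or_gt y 1 with h1 | h1
  · have hym : 0 ≤ y ^ m := pow_nonneg hy m
    nlinarith
  · have hsq : (a+1) * y - c * y^2 ≤ (a+1)^2 / (4*c) := by
      rw [div_eq_mul_inv]
      have h4c : (0:ℝ) < 4 * c := by linarith
      rw [← sub_nonneg]
      have expand : (a+1)^2 * (4*c)⁻¹ - ((a+1)*y - c*y^2)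
          = ((a+1) - 2*c*y)^2 * (4*c)⁻¹ := by
        field_simp
        ring
      rw [expand]
      positivity
    have hym : y^2 ≤ y^m := by
      rcases hm with rfl | rfl
      · exact le_refl _
      · nlinarith
    nlinarith [mul_le_mul_of_nonneg_left hym hc.le]

set_option maxHeartbeats 1000000 in
lemma key_pointwise (η : ℝ) (hη : 0 < η) (m : ℕ) (hm : m = 2 ∨ m = 3)
    (n : ℕ) (hn : 1 ≤ n) (hCond : ∀ d : ℕ, n ≠ 5 + 4 * d)
    (σ c₀ : ℝ) (hσ : 0 < σ) (hc₀ : 0 < c₀)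
    (ε T : ℝ) (hε : 0 < ε) (hεT : ε < T) (s₁ : ℝ) (hs₁ : 0 < s₁) :
    ∃ c₁ > (0:ℝ), ∀ t₁ ∈ Set.Icc ε T, ∀ t₂ ∈ Set.Icc ε T, ∀ P ξ : ℝ,
      |P| ≤ c₀ * |ξ| ^ σ →
      (1 + |ξ|^2) ^ s₁ *
        ‖Complex.exp ((-Complex.I * (P:ℂ) * (ξ:ℂ) + phi η m n ξ) * (t₁:ℂ)) -
          Complex.exp ((-Complex.I * (P:ℂ) * (ξ:ℂ) + phi η m n ξ) * (t₂:ℂ))‖ ^ 2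
      ≤ c₁ * |t₁ - t₂| := by
  set N : ℕ := max ⌈s₁⌉₊ 1 with hN
  set Nσ : ℕ := max ⌈σ⌉₊ 1 with hNσ
  set A : ℝ := (2*T*η + 1) + (2*T*η + 1)^2 / (4*(2*ε*η)) with hA
  set K : ℕ := Nσ + 1 + n + m with hK
  set J : ℕ := 2*N + K with hJ
  have hT : (0:ℝ) < T := lt_trans hε hεT
  have hJ1 : 1 ≤ J := by
    have : 1 ≤ N := le_max_right _ _
    omega
  refine ⟨4 * Real.exp A * (2*c₀ + 2*η) * Real.exp 1 * (J:ℝ)^J, by positivity,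
    fun t₁ ht₁ t₂ ht₂ P ξ hP => ?_⟩
  set y := |ξ| with hy'
  have hy : (0:ℝ) ≤ y := abs_nonneg _
  set w : ℂ := -Complex.I * (P:ℂ) * (ξ:ℂ) + phi η m n ξ with hw
  have hwre : w.re = (phi η m n ξ).re := by
    rw [hw]
    simp [Complex.add_re, Complex.mul_re, Complex.mul_im]
  have hre_le : w.re ≤ η*y - η*y^m := by
    rw [hwre]; exact phi_re_le η hη.le m n hn hCond ξ
  set L : ℝ := T*η*y - ε*η*y^m with hL
  have hLt : ∀ t ∈ Set.Icc ε T, w.re * t ≤ L := by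
    intro t ht
    rcases le_or_gt 0 w.re with hpos | hneg
    · have h1 : w.re * t ≤ w.re * T := mul_le_mul_of_nonneg_left ht.2 hpos
      have h2 : w.re * T ≤ (η*y - η*y^m) * T := mul_le_mul_of_nonneg_right hre_le hT.le
      have h3 : (0:ℝ) ≤ η * y^m * (T - ε) :=
        mul_nonneg (mul_nonneg hη.le (pow_nonneg hy m)) (by linarith)
      rw [hL]; nlinarith
    · have h1 : w.re * t ≤ w.re * ε := by
        have := mul_le_mul_of_nonpos_left ht.1 hneg.le
        linarith [this]
      have h2 : w.re * ε ≤ (η*y - η*y^m) * ε := mul_le_mul_of_nonneg_right hre_le hε.le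
      have h3 : (0:ℝ) ≤ η * y * (T - ε) := mul_nonneg (mul_nonneg hη.le hy) (by linarith)
      rw [hL]; nlinarith
  set M : ℝ := Real.exp L with hM
  have hMpos : 0 < M := Real.exp_pos _
  have habst : ∀ t : ℝ, ‖Complex.exp (w * (t:ℂ))‖ = Real.exp (w.re * t) := by
    intro t
    rw [Complex.norm_exp]
    congr 1
    simp [Complex.mul_re]
  have hb1 : ‖Complex.exp (w * (t₁:ℂ))‖ ≤ M := by
    rw [habst]; exact Real.exp_le_exp.mpr (hLt t₁ ht₁)
  have hb2 : ‖Complex.exp (w * (t₂:ℂ))‖ ≤ M := by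
    rw [habst]; exact Real.exp_le_exp.mpr (hLt t₂ ht₂)
  have hdiff := exp_diff_le w t₁ t₂ M hMpos hb1 hb2
  have hdiff2 : ‖Complex.exp (w * (t₁:ℂ)) - Complex.exp (w * (t₂:ℂ))‖ ≤ 2*M := by
    calc ‖Complex.exp (w * (t₁:ℂ)) - Complex.exp (w * (t₂:ℂ))‖
        ≤ ‖Complex.exp (w * (t₁:ℂ))‖ + ‖Complex.exp (w * (t₂:ℂ))‖ :=
          norm_sub_le _ _
      _ ≤ 2*M := by linarith
  have hsq : ‖Complex.exp (w * (t₁:ℂ)) - Complex.exp (w * (t₂:ℂ))‖ ^ 2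
      ≤ (2*M*(‖w‖ * |t₁ - t₂|)) * (2*M) := by
    rw [sq]
    exact mul_le_mul hdiff hdiff2 (norm_nonneg _)
      (by positivity)
  -- bound on abs w
  have hyσ : y ^ σ ≤ 1 + y ^ Nσ := by
    rcases le_or_gt y 1 with h1 | h1
    · have := Real.rpow_le_one hy h1 hσ.le
      have h2 : (0:ℝ) ≤ y ^ Nσ := pow_nonneg hy _
      linarith
    · have hσN : σ ≤ (Nσ:ℝ) := by
        calc σ ≤ (⌈σ⌉₊:ℝ) := Nat.le_ceil σ
        _ ≤ (Nσ:ℝ) := by exact_mod_cast Nat.cast_le.mpr (le_max_left _ _)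
      have := Real.rpow_le_rpow_of_exponent_le h1.le hσN
      rw [Real.rpow_natCast] at this
      linarith
  have h1y : (1:ℝ) ≤ 1 + y := by linarith
  have hpowK : ∀ j : ℕ, j ≤ K → (1+y)^j ≤ (1+y)^K := fun j hj => pow_le_pow_right₀ h1y hj
  have habsw : ‖w‖ ≤ (2*c₀ + 2*η) * (1+y)^K := by
    have ht1 : ‖w‖ ≤ |P| * y + η * (y^n + y^m) := by
      rw [hw]
      refine le_trans (norm_add_le _ _) ?_
      have : ‖-Complex.I * (P:ℂ) * (ξ:ℂ)‖ = |P| * y := by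
        simp [norm_mul, hy']
      rw [this]
      exact add_le_add_right (phi_abs_le η hη.le m n hn ξ) _
    have ht2 : |P| * y ≤ c₀ * (1 + y^Nσ) * y := by
      have : |P| ≤ c₀ * (1 + y^Nσ) := le_trans hP (by
        exact mul_le_mul_of_nonneg_left hyσ hc₀.le)
      exact mul_le_mul_of_nonneg_right this hy
    have ht3 : c₀ * (1 + y^Nσ) * y ≤ 2*c₀*(1+y)^(Nσ+1) := by
      have e1 : y^Nσ ≤ (1+y)^Nσ := pow_le_pow_left₀ hy (by linarith) _
      have e2 : (1:ℝ) ≤ (1+y)^Nσ := one_le_pow₀ h1y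
      have e3 : y ≤ 1 + y := by linarith
      have e4 : (1:ℝ) + y^Nσ ≤ 2*(1+y)^Nσ := by linarith
      calc c₀ * (1 + y^Nσ) * y ≤ c₀ * (2*(1+y)^Nσ) * (1+y) := by
            apply mul_le_mul _ e3 hy _
            · exact mul_le_mul_of_nonneg_left e4 hc₀.le
            · positivity
        _ = 2*c₀*(1+y)^(Nσ+1) := by rw [pow_succ]; ring
    have hn' : y^n ≤ (1+y)^K := le_trans (pow_le_pow_left₀ hy (by linarith) n) (hpowK n (by omega))
    have hm' : y^m ≤ (1+y)^K := le_trans (pow_le_pow_left₀ hy (by linarith) m) (hpowK m (by omega))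
    have hK' : (1+y)^(Nσ+1) ≤ (1+y)^K := hpowK _ (by omega)
    have ht4 : |P| * y ≤ 2*c₀*(1+y)^K := by
      have h5 : 2*c₀*(1+y)^(Nσ+1) ≤ 2*c₀*(1+y)^K :=
        mul_le_mul_of_nonneg_left hK' (by positivity)
      linarith [le_trans ht2 ht3]
    have a1 : η * y^n ≤ η * (1+y)^K := mul_le_mul_of_nonneg_left hn' hη.le
    have a2 : η * y^m ≤ η * (1+y)^K := mul_le_mul_of_nonneg_left hm' hη.le
    have hη2 : η * (y^n + y^m) ≤ 2*η*(1+y)^K := by linarith [a1, a2, mul_add η (y^n) (y^m)]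
    calc ‖w‖ ≤ |P| * y + η * (y^n + y^m) := ht1
      _ ≤ 2*c₀*(1+y)^K + 2*η*(1+y)^K := by linarith
      _ = (2*c₀ + 2*η) * (1+y)^K := by ring
  -- bound on M^2
  have hM2 : M^2 ≤ Real.exp A * Real.exp (-(1+y)) * Real.exp 1 := by
    have e1 : M^2 = Real.exp (L + L) := by rw [sq, ← Real.exp_add]
    have e2 : L + L ≤ A - y := by
      have := lin_bound (2*T*η) (2*ε*η) (by positivity) (by positivity) m hm y hy
      rw [hL, hA]
      linarith [this]
    have e3 : Real.exp A * Real.exp (-(1+y)) * Real.exp 1 = Real.exp (A - y) := by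
      rw [← Real.exp_add, ← Real.exp_add]; congr 1; ring
    rw [e1, e3]
    exact Real.exp_le_exp.mpr e2
  -- bound on rpow factor
  have hrpow : (1 + y^2) ^ s₁ ≤ (1+y)^(2*N) := by
    have e0 : (1:ℝ) ≤ 1 + y^2 := by linarith [pow_nonneg hy 2]
    have e1 : s₁ ≤ (N:ℝ) := by
      calc s₁ ≤ (⌈s₁⌉₊:ℝ) := Nat.le_ceil s₁
      _ ≤ (N:ℝ) := by exact_mod_cast Nat.cast_le.mpr (le_max_left _ _)
    calc (1 + y^2) ^ s₁ ≤ (1 + y^2) ^ (N:ℝ) := Real.rpow_le_rpow_of_exponent_le e0 e1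
      _ = (1 + y^2) ^ N := by rw [Real.rpow_natCast]
      _ ≤ ((1+y)^2) ^ N := pow_le_pow_left₀ (by positivity) (by nlinarith [hy]) N
      _ = (1+y)^(2*N) := by rw [← pow_mul]
  have hPexp : (1+y)^(2*N) * (1+y)^K * Real.exp (-(1+y)) ≤ (J:ℝ)^J := by
    rw [← pow_add]
    exact aux_pow_exp J hJ1 (1+y) (by linarith)
  have hB : (1 + y^2) ^ s₁ * (4*M^2*‖w‖)
      ≤ 4 * Real.exp A * (2*c₀ + 2*η) * Real.exp 1 * (J:ℝ)^J := by
    have hBw : 4*M^2*‖w‖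
        ≤ 4 * (Real.exp A * Real.exp (-(1+y)) * Real.exp 1) * ((2*c₀+2*η)*(1+y)^K) := by
      have s1 : (4:ℝ)*M^2*‖w‖ ≤ 4*M^2*((2*c₀+2*η)*(1+y)^K) :=
        mul_le_mul_of_nonneg_left habsw (by positivity)
      have s2 : (4:ℝ)*M^2 ≤ 4*(Real.exp A * Real.exp (-(1+y)) * Real.exp 1) := by linarith
      have s3 : (0:ℝ) ≤ (2*c₀+2*η)*(1+y)^K := by positivity
      calc (4:ℝ)*M^2*‖w‖ ≤ 4*M^2*((2*c₀+2*η)*(1+y)^K) := s1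
        _ ≤ 4*(Real.exp A * Real.exp (-(1+y)) * Real.exp 1) * ((2*c₀+2*η)*(1+y)^K) :=
            mul_le_mul_of_nonneg_right s2 s3
    calc (1 + y^2) ^ s₁ * (4*M^2*‖w‖)
        ≤ (1+y)^(2*N) * (4 * (Real.exp A * Real.exp (-(1+y)) * Real.exp 1) *
            ((2*c₀+2*η)*(1+y)^K)) := by
          refine mul_le_mul hrpow hBw ?_ ?_
          · positivity
          · positivity
      _ = (4 * Real.exp A * (2*c₀ + 2*η) * Real.exp 1) *
            ((1+y)^(2*N) * (1+y)^K * Real.exp (-(1+y))) := by ring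
      _ ≤ (4 * Real.exp A * (2*c₀ + 2*η) * Real.exp 1) * (J:ℝ)^J :=
          mul_le_mul_of_nonneg_left hPexp (by positivity)
  calc (1 + y^2) ^ s₁ *
        ‖Complex.exp (w * (t₁:ℂ)) - Complex.exp (w * (t₂:ℂ))‖ ^ 2
      ≤ (1 + y^2) ^ s₁ * ((2*M*(‖w‖ * |t₁ - t₂|)) * (2*M)) :=
        mul_le_mul_of_nonneg_left hsq (by positivity)
    _ = ((1 + y^2) ^ s₁ * (4*M^2*‖w‖)) * |t₁ - t₂| := by ring
    _ ≤ (4 * Real.exp A * (2*c₀ + 2*η) * Real.exp 1 * (J:ℝ)^J) * |t₁ - t₂| :=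
        mul_le_mul_of_nonneg_right hB (abs_nonneg _)

/-- Frequency-side form of the time-continuity estimate
`‖K(t₁)∗ψ − K(t₂)∗ψ‖_{H^{s+s₁}} ≤ c₁|t₁−t₂|^{1/2}‖ψ‖_{H^s}` (Lemma 2). -/
theorem time_continuity_frequency (η : ℝ) (hη : 0 < η) (m : ℕ) (hm : m = 2 ∨ m = 3)
    (n : ℕ) (hn : 1 ≤ n) (hCond : ∀ d : ℕ, n ≠ 5 + 4 * d)
    (σ c₀ : ℝ) (hσ : 0 < σ) (hc₀ : 0 < c₀)
    (p : ℝ → ℝ) (hp_meas : Measurable p)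
    (hp_loc : ∀ R : ℝ, 0 < R → ∃ C : ℝ, ∀ ξ : ℝ, |ξ| ≤ R → |p ξ| ≤ C)
    (hp_cont : ContinuousAt p 0)
    (hp_smooth : ContDiffOn ℝ (⊤ : ℕ∞) p {(0 : ℝ)}ᶜ)
    (hp_poly : ∀ᵐ ξ : ℝ ∂(volume : Measure ℝ), |p ξ| ≤ c₀ * |ξ| ^ σ)
    (ε T : ℝ) (hε : 0 < ε) (hεT : ε < T)
    (s s₁ : ℝ) (hs₁ : 0 < s₁) :
    ∃ c₁ > (0 : ℝ), ∀ t₁ ∈ Set.Icc ε T, ∀ t₂ ∈ Set.Icc ε T,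
      ∀ g : ℝ → ℂ, Measurable g →
        (∫⁻ ξ : ℝ, ENNReal.ofReal ((1 + |ξ| ^ 2) ^ (s + s₁) *
          ‖(Complex.exp ((-Complex.I * (p ξ : ℂ) * (ξ : ℂ) + phi η m n ξ) * (t₁ : ℂ)) -
             Complex.exp ((-Complex.I * (p ξ : ℂ) * (ξ : ℂ) + phi η m n ξ) * (t₂ : ℂ)))‖ ^ 2 *
          ‖g ξ‖ ^ 2)) ≤
        ENNReal.ofReal (c₁ * |t₁ - t₂|) *
          ∫⁻ ξ : ℝ, ENNReal.ofReal ((1 + |ξ| ^ 2) ^ s * ‖g ξ‖ ^ 2) := by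
  obtain ⟨c₁, hc₁, hkey⟩ := key_pointwise η hη m hm n hn hCond σ c₀ hσ hc₀ ε T hε hεT s₁ hs₁
  refine ⟨c₁, hc₁, fun t₁ ht₁ t₂ ht₂ g hg => ?_⟩
  have hpt : ∀ᵐ ξ : ℝ ∂(volume : Measure ℝ),
      ENNReal.ofReal ((1 + |ξ| ^ 2) ^ (s + s₁) *
        ‖Complex.exp ((-Complex.I * (p ξ : ℂ) * (ξ : ℂ) + phi η m n ξ) * (t₁ : ℂ)) -
           Complex.exp ((-Complex.I * (p ξ : ℂ) * (ξ : ℂ) + phi η m n ξ) * (t₂ : ℂ))‖ ^ 2 *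
        ‖g ξ‖ ^ 2) ≤
      ENNReal.ofReal (c₁ * |t₁ - t₂|) *
        ENNReal.ofReal ((1 + |ξ| ^ 2) ^ s * ‖g ξ‖ ^ 2) := by
    filter_upwards [hp_poly] with ξ hξ
    rw [← ENNReal.ofReal_mul (by positivity)]
    apply ENNReal.ofReal_le_ofReal
    have hD := hkey t₁ ht₁ t₂ ht₂ (p ξ) ξ hξ
    have hsplit : ((1:ℝ) + |ξ| ^ 2) ^ (s + s₁)
        = (1 + |ξ| ^ 2) ^ s * (1 + |ξ| ^ 2) ^ s₁ := by
      rw [← Real.rpow_add (by positivity)]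
    have h2 : (0:ℝ) ≤ (1 + |ξ| ^ 2) ^ s * ‖g ξ‖ ^ 2 := by positivity
    calc (1 + |ξ| ^ 2) ^ (s + s₁) *
          ‖Complex.exp ((-Complex.I * (p ξ : ℂ) * (ξ : ℂ) + phi η m n ξ) * (t₁ : ℂ)) -
             Complex.exp ((-Complex.I * (p ξ : ℂ) * (ξ : ℂ) + phi η m n ξ) * (t₂ : ℂ))‖ ^ 2 *
          ‖g ξ‖ ^ 2
        = ((1 + |ξ| ^ 2) ^ s₁ *
            ‖Complex.exp ((-Complex.I * (p ξ : ℂ) * (ξ : ℂ) + phi η m n ξ) * (t₁ : ℂ)) -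
               Complex.exp ((-Complex.I * (p ξ : ℂ) * (ξ : ℂ) + phi η m n ξ) * (t₂ : ℂ))‖ ^ 2)
          * ((1 + |ξ| ^ 2) ^ s * ‖g ξ‖ ^ 2) := by
          rw [hsplit]; ring
      _ ≤ (c₁ * |t₁ - t₂|) * ((1 + |ξ| ^ 2) ^ s * ‖g ξ‖ ^ 2) :=
          mul_le_mul_of_nonneg_right hD h2
  calc (∫⁻ ξ : ℝ, ENNReal.ofReal ((1 + |ξ| ^ 2) ^ (s + s₁) *
          ‖Complex.exp ((-Complex.I * (p ξ : ℂ) * (ξ : ℂ) + phi η m n ξ) * (t₁ : ℂ)) -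
             Complex.exp ((-Complex.I * (p ξ : ℂ) * (ξ : ℂ) + phi η m n ξ) * (t₂ : ℂ))‖ ^ 2 *
          ‖g ξ‖ ^ 2))
      ≤ ∫⁻ ξ : ℝ, ENNReal.ofReal (c₁ * |t₁ - t₂|) *
          ENNReal.ofReal ((1 + |ξ| ^ 2) ^ s * ‖g ξ‖ ^ 2) := lintegral_mono_ae hpt
    _ = ENNReal.ofReal (c₁ * |t₁ - t₂|) *
          ∫⁻ ξ : ℝ, ENNReal.ofReal ((1 + |ξ| ^ 2) ^ s * ‖g ξ‖ ^ 2) :=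
        lintegral_const_mul' _ _ ENNReal.ofReal_ne_top
end

section
/- Let m∈{2,3}, let n satisfy (Cond-n), and let s₂≥0. Then there exist constants C>0 and c>0, depending only on η, m, n and s₂, such that for all t>0 and all ξ∈ℝ: (1+|ξ|²)^{s₂} · |exp(φ_{m,n}(ξ)t)|² ≤ C·e^{ct}·t^{−2αs₂}. (This is the frequency-side form of the smoothing estimate ‖K_{m,n}(t,·)∗ψ‖_{H^{s₁+s₂}} ≤ C e^{ct} t^{−αs₂} ‖ψ‖_{H^{s₁}}.) -/
open MeasureTheory

/-!
Since `‖exp (φ t)‖² = exp (2 t Re φ)`, everything rests on the dissipation bound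
`2 Re φ(ξ) ≤ c₁ - a |ξ|^b` with `b = 1/α`. The dispersive term `i^{n+1}|ξ|ξ^{n-1}` is purely
imaginary for even `n`, real and dissipative (`= |ξ|^n`) for `n ≡ 3 mod 4`, and for `n = 1` it is
the growing term `η|ξ|`, dominated by `η|ξ|^m`; (Cond-n) excludes the remaining case
`n ≡ 1 mod 4`, `n ≥ 5`. With `γ = 2s/b`, the weight satisfies `(1+ξ²)^s ≤ 2^s (1 + |ξ|^{2s})`, and
`|ξ|^{2s} e^{-a|ξ|^b t} = u^γ e^{-u} (at)^{-γ}` for `u = a|ξ|^b t`, where `u^γ e^{-u} ≤ ⌈γ⌉!`.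
The constant part of the weight is absorbed using `t^γ ≤ e^{γt}`.
-/

open Real
open scoped Nat

lemma rpow_mul_exp_neg_le_factorial {γ u : ℝ} (hγ : 0 ≤ γ) (hu : 0 ≤ u) :
    u ^ γ * exp (-u) ≤ ((⌈γ⌉₊)! : ℝ) := by
  set k := ⌈γ⌉₊
  have hk : (1 : ℝ) ≤ k ! := mod_cast Nat.one_le_iff_ne_zero.mpr k.factorial_ne_zero
  suffices u ^ γ ≤ k ! * exp u by
    calc u ^ γ * exp (-u) ≤ k ! * exp u * exp (-u) := by gcongr
      _ = k ! := by rw [mul_assoc, ← exp_add, add_neg_cancel, exp_zero, mul_one]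
  rcases le_total u 1 with hu1 | hu1
  · calc u ^ γ ≤ 1 := rpow_le_one hu hu1 hγ
      _ ≤ k ! * exp u := one_le_mul_of_one_le_of_one_le hk (one_le_exp hu)
  · calc u ^ γ ≤ u ^ (k : ℝ) := rpow_le_rpow_of_exponent_le hu1 (Nat.le_ceil γ)
      _ = u ^ k := rpow_natCast u k
      _ ≤ k ! * exp u := by
        rw [← div_le_iff₀' (by positivity)]
        exact pow_div_factorial_le_exp u hu k

lemma one_add_rpow_le {y s : ℝ} (hy : 0 ≤ y) (hs : 0 ≤ s) :
    (1 + y) ^ s ≤ 2 ^ s * (1 + y ^ s) := by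
  rcases le_total y 1 with hy1 | hy1
  · calc (1 + y) ^ s ≤ 2 ^ s := by gcongr; linarith
      _ ≤ 2 ^ s * (1 + y ^ s) := by
        have : 0 ≤ y ^ s := rpow_nonneg hy s
        nlinarith [rpow_pos_of_pos two_pos s]
  · calc (1 + y) ^ s ≤ (2 * y) ^ s := by gcongr; linarith
      _ = 2 ^ s * y ^ s := mul_rpow zero_le_two hy
      _ ≤ 2 ^ s * (1 + y ^ s) := by gcongr; linarith

lemma rpow_le_exp_mul {t γ : ℝ} (ht : 0 < t) (hγ : 0 ≤ γ) : t ^ γ ≤ exp (γ * t) := by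
  rw [rpow_def_of_pos ht, mul_comm γ]
  gcongr
  linarith [log_le_sub_one_of_pos ht]

lemma exists_one_add_sq_rpow_mul_exp_neg_le {a : ℝ} (ha : 0 < a) {b : ℕ} (hb : 0 < b) {s : ℝ}
    (hs : 0 ≤ s) :
    ∃ C > (0 : ℝ), ∃ c > (0 : ℝ), ∀ t : ℝ, 0 < t → ∀ x : ℝ, 0 ≤ x →
      (1 + x ^ 2) ^ s * exp (-(a * x ^ b * t)) ≤ C * exp (c * t) * t ^ (-(2 * s / b)) := by
  set γ := 2 * s / b
  have hγ : 0 ≤ γ := by positivity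
  set K : ℝ := ↑(⌈γ⌉₊)!
  refine ⟨2 ^ s * (1 + K * a ^ (-γ)), by positivity, γ + 1, by positivity, fun t ht x hx => ?_⟩
  set u := a * x ^ b * t
  have hu : 0 ≤ u := by positivity
  have hweight : (x ^ 2) ^ s = u ^ γ * (a * t) ^ (-γ) := by
    have hxb : (x ^ b) ^ γ = (x ^ 2) ^ s := by
      rw [← rpow_natCast, ← rpow_natCast x 2, ← rpow_mul hx, ← rpow_mul hx]
      congr 1
      simp only [γ]
      push_cast
      field_simp
    rw [show u = a * t * x ^ b by ring, mul_rpow (by positivity) (by positivity), mul_right_comm,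
      ← rpow_add (by positivity), add_neg_cancel, rpow_zero, one_mul, hxb]
  have hdecay : (x ^ 2) ^ s * exp (-u) ≤ K * a ^ (-γ) * t ^ (-γ) := by
    rw [hweight, mul_right_comm, mul_rpow ha.le ht.le, ← mul_assoc]
    gcongr
    exact rpow_mul_exp_neg_le_factorial hγ hu
  have hw : 1 ≤ exp ((γ + 1) * t) * t ^ (-γ) := by
    rw [rpow_neg ht.le, ← div_eq_mul_inv, one_le_div (by positivity)]
    exact (rpow_le_exp_mul ht hγ).trans (exp_le_exp.mpr (by nlinarith))
  have htw : t ^ (-γ) ≤ exp ((γ + 1) * t) * t ^ (-γ) :=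
    le_mul_of_one_le_left (by positivity) (one_le_exp (by positivity))
  set w := exp ((γ + 1) * t) * t ^ (-γ)
  calc (1 + x ^ 2) ^ s * exp (-u) ≤ 2 ^ s * (1 + (x ^ 2) ^ s) * exp (-u) := by
        gcongr; exact one_add_rpow_le (by positivity) hs
    _ = 2 ^ s * (exp (-u) + (x ^ 2) ^ s * exp (-u)) := by ring
    _ ≤ 2 ^ s * (w + K * a ^ (-γ) * w) := by
        gcongr 2 ^ s * (?_ + ?_)
        · exact (exp_le_one_iff.mpr (by linarith)).trans hw
        · exact hdecay.trans (by gcongr)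
    _ = 2 ^ s * (1 + K * a ^ (-γ)) * exp ((γ + 1) * t) * t ^ (-γ) := by ring

lemma norm_exp_mul_ofReal_sq (z : ℂ) (t : ℝ) :
    ‖Complex.exp (z * t)‖ ^ 2 = exp (2 * z.re * t) := by
  rw [Complex.norm_exp, Complex.re_mul_ofReal, ← exp_nat_mul]
  ring_nf

lemma exists_one_add_sq_rpow_mul_norm_exp_sq_le {f : ℝ → ℂ} {b : ℕ} (hb : 0 < b) {a c₁ : ℝ}
    (ha : 0 < a) (hc₁ : 0 ≤ c₁) (hf : ∀ ξ, 2 * (f ξ).re ≤ c₁ - a * |ξ| ^ b) {s : ℝ} (hs : 0 ≤ s) :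
    ∃ C > (0 : ℝ), ∃ c > (0 : ℝ), ∀ t : ℝ, 0 < t → ∀ ξ : ℝ,
      (1 + |ξ| ^ 2) ^ s * ‖Complex.exp (f ξ * t)‖ ^ 2 ≤ C * exp (c * t) * t ^ (-(2 * s / b)) := by
  obtain ⟨C, hC, c, hc, hbound⟩ := exists_one_add_sq_rpow_mul_exp_neg_le ha hb hs
  refine ⟨C, hC, c + c₁, by positivity, fun t ht ξ => ?_⟩
  have hdiss : exp (2 * (f ξ).re * t) ≤ exp (c₁ * t) * exp (-(a * |ξ| ^ b * t)) := by
    rw [← exp_add]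
    gcongr
    nlinarith [hf ξ]
  calc (1 + |ξ| ^ 2) ^ s * ‖Complex.exp (f ξ * t)‖ ^ 2
      ≤ exp (c₁ * t) * ((1 + |ξ| ^ 2) ^ s * exp (-(a * |ξ| ^ b * t))) := by
        rw [norm_exp_mul_ofReal_sq, mul_left_comm]
        gcongr
    _ ≤ exp (c₁ * t) * (C * exp (c * t) * t ^ (-(2 * s / b))) :=
        mul_le_mul_of_nonneg_left (hbound t ht |ξ| (abs_nonneg ξ)) (exp_pos _).le
    _ = C * exp ((c + c₁) * t) * t ^ (-(2 * s / b)) := by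
        rw [add_mul, exp_add]
        ring

lemma re_phi (η : ℝ) (m n : ℕ) (ξ : ℝ) :
    (phi η m n ξ).re = -η * ((Complex.I ^ (n + 1)).re * |ξ| * ξ ^ (n - 1) + |ξ| ^ m) := by
  rw [phi, ← Complex.ofReal_neg, Complex.re_ofReal_mul]
  simp [Complex.mul_re, ← Complex.ofReal_pow]

lemma re_I_pow_succ_of_even {n : ℕ} (hn : Even n) : (Complex.I ^ (n + 1)).re = 0 := by
  obtain ⟨k, rfl⟩ := hn
  rw [pow_succ, ← two_mul, pow_mul, Complex.I_sq]
  rcases neg_one_pow_eq_or ℂ k with h | h <;> simp [h]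

lemma I_pow_succ_of_mod_four_eq_three {n : ℕ} (hn : n % 4 = 3) : Complex.I ^ (n + 1) = 1 := by
  rw [show n + 1 = 4 * (n / 4 + 1) by omega, pow_mul, Complex.I_pow_four, one_pow]

lemma abs_mul_pow_pred_of_odd {n : ℕ} (hn : Odd n) (ξ : ℝ) : |ξ| * ξ ^ (n - 1) = |ξ| ^ n := by
  obtain ⟨k, rfl⟩ := hn
  rw [Nat.add_sub_cancel, ← (even_two_mul k).pow_abs, ← pow_succ']

lemma two_mul_sub_pow_le {m : ℕ} (hm : 2 ≤ m) {y : ℝ} (hy : 0 ≤ y) : 2 * y - y ^ m ≤ 2 := by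
  rcases le_total y 1 with hy1 | hy1
  · nlinarith [pow_nonneg hy m]
  · nlinarith [pow_le_pow_right₀ hy1 hm]

lemma exists_two_mul_re_phi_le {η : ℝ} (hη : 0 < η) {m : ℕ} (hm : m = 2 ∨ m = 3) {n : ℕ}
    (hCond : ∀ d : ℕ, n ≠ 5 + 4 * d) :
    ∃ b : ℕ, 0 < b ∧ alph m n = 1 / b ∧ ∃ a > (0 : ℝ), ∃ c₁ ≥ (0 : ℝ),
      ∀ ξ, 2 * (phi η m n ξ).re ≤ c₁ - a * |ξ| ^ b := by
  have hm2 : 2 ≤ m := by omega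
  by_cases hn : n = 1 ∨ Even n
  · refine ⟨m, by omega, if_pos hn, ?_⟩
    rcases hn with rfl | hn
    · refine ⟨η, hη, 2 * η, by positivity, fun ξ => ?_⟩
      have h := two_mul_sub_pow_le hm2 (abs_nonneg ξ)
      rw [re_phi, one_add_one_eq_two, Complex.I_sq, Nat.sub_self, pow_zero, mul_one,
        Complex.neg_re, Complex.one_re]
      nlinarith
    · refine ⟨2 * η, by positivity, 0, le_rfl, fun ξ => ?_⟩
      rw [re_phi, re_I_pow_succ_of_even hn]
      linarith
  · rw [not_or] at hn
    have hodd : Odd n := Nat.not_even_iff_odd.mp hn.2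
    have h3 : n % 4 = 3 := by
      have := hCond ((n - 5) / 4)
      have := Nat.odd_iff.mp hodd
      omega
    refine ⟨n, hodd.pos, if_neg (by tauto), 2 * η, by positivity, 0, le_rfl, fun ξ => ?_⟩
    rw [re_phi, I_pow_succ_of_mod_four_eq_three h3, Complex.one_re, one_mul,
      abs_mul_pow_pred_of_odd hodd]
    nlinarith [pow_nonneg (abs_nonneg ξ) m]

theorem smoothing_frequency_general (η : ℝ) (hη : 0 < η) (m : ℕ) (hm : m = 2 ∨ m = 3)
    (n : ℕ) (hCond : ∀ d : ℕ, n ≠ 5 + 4 * d)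
    (s₂ : ℝ) (hs₂ : 0 ≤ s₂) :
    ∃ C > (0 : ℝ), ∃ c > (0 : ℝ), ∀ t : ℝ, 0 < t → ∀ ξ : ℝ,
      (1 + |ξ| ^ 2) ^ s₂ * ‖Complex.exp (phi η m n ξ * (t : ℂ))‖ ^ 2 ≤
        C * Real.exp (c * t) * t ^ (-(2 * alph m n * s₂)) := by
  obtain ⟨b, hb, hα, a, ha, c₁, hc₁, hre⟩ := exists_two_mul_re_phi_le hη hm hCond
  have hexponent : 2 * alph m n * s₂ = 2 * s₂ / b := by
    rw [hα]
    ring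
  rw [hexponent]
  exact exists_one_add_sq_rpow_mul_norm_exp_sq_le hb ha hc₁ hre hs₂

/-- Frequency-side form of the smoothing estimate (Lemma 3):
`(1+|ξ|²)^{s₂}·|exp(φ_{m,n}(ξ)t)|² ≤ C e^{ct} t^{−2αs₂}`. -/
theorem smoothing_frequency (η : ℝ) (hη : 0 < η) (m : ℕ) (hm : m = 2 ∨ m = 3)
    (n : ℕ) (hn : 1 ≤ n) (hCond : ∀ d : ℕ, n ≠ 5 + 4 * d)
    (s₂ : ℝ) (hs₂ : 0 ≤ s₂) :
    ∃ C > (0 : ℝ), ∃ c > (0 : ℝ), ∀ t : ℝ, 0 < t → ∀ ξ : ℝ,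
      (1 + |ξ| ^ 2) ^ s₂ * ‖Complex.exp (phi η m n ξ * (t : ℂ))‖ ^ 2 ≤
        C * Real.exp (c * t) * t ^ (-(2 * alph m n * s₂)) :=
  smoothing_frequency_general η hη m hm n hCond s₂ hs₂
end

section
/- For every integer n≥1 and every real γ>0 there exists a constant c>0, depending only on n and γ, such that for all x∈ℝ: ∫_ℝ 1/((1+|x−y|^{n+1})(1+|y|^{γ})) dy ≤ c/(1+|x|^{min(γ,n+1)}). -/
/-!
Split the line according to whether `|y| > |x|/2` or `|y| ≤ |x|/2`; in the second case
`|x - y| ≥ |x|/2`. In the first region `(1 + |y|^γ)⁻¹ = O((1 + |x|^γ)⁻¹)` and the other factor,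
a translate of the integrable `(1 + |t|^(n+1))⁻¹`, integrates to a constant. In the second region
`(1 + |x - y|^(n+1))⁻¹ = O((1 + |x|^(n+1))⁻¹)`, while `∫_{|y| ≤ |x|/2} (1 + |y|^γ)⁻¹` is bounded
when `γ > 1` and at most `|x|` when `γ ≤ 1`; that lost power of `|x|` is affordable because
`n + 1 ≥ 2 ≥ 1 + γ`.
-/

open MeasureTheory Metric Real

variable {a b γ : ℝ}

lemma one_div_one_add_rpow_le_two_div {t : ℝ} (ht : 0 ≤ t) (ha : 0 ≤ a) (hab : a ≤ b) :
    1 / (1 + t ^ b) ≤ 2 / (1 + t ^ a) := by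
  have hta : t ^ a ≤ 1 + t ^ b := by
    rcases le_total t 1 with h | h
    · linarith [rpow_le_one ht h ha, rpow_nonneg ht b]
    · linarith [rpow_le_rpow_of_exponent_le h hab]
  rw [div_le_div_iff₀ (by positivity) (by positivity)]
  linarith [rpow_nonneg ht b]

lemma one_div_one_add_rpow_le_of_le_two_mul {u s : ℝ} (hγ : 0 ≤ γ) (hu : 0 ≤ u)
    (h : u ≤ 2 * s) : 1 / (1 + s ^ γ) ≤ 2 ^ γ / (1 + u ^ γ) := by
  have hs : 0 ≤ s := by linarith
  have hus : u ^ γ ≤ 2 ^ γ * s ^ γ := by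
    rw [← mul_rpow zero_le_two hs]
    exact rpow_le_rpow hu h hγ
  have h2γ : 1 ≤ (2 : ℝ) ^ γ := one_le_rpow one_le_two hγ
  rw [div_le_div_iff₀ (by positivity) (by positivity)]
  linarith

lemma one_add_rpow_le_two_rpow_sub_one_mul {t r : ℝ} (ht : 0 ≤ t) (hr : 1 ≤ r) :
    (1 + t) ^ r ≤ 2 ^ (r - 1) * (1 + t ^ r) := by
  lift t to NNReal using ht
  simpa using NNReal.coe_le_coe.mpr (NNReal.rpow_add_le_mul_rpow_add_rpow 1 t hr)

lemma continuous_one_div_one_add_abs_rpow {r : ℝ} (hr : 0 ≤ r) :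
    Continuous fun y : ℝ => 1 / (1 + |y| ^ r) :=
  continuous_const.div (continuous_const.add (continuous_abs.rpow_const fun _ => Or.inr hr))
    fun _ => by positivity

lemma integrable_one_div_one_add_abs_rpow {r : ℝ} (hr : 1 < r) :
    Integrable fun y : ℝ => 1 / (1 + |y| ^ r) := by
  have hdom : Integrable fun y : ℝ => 2 ^ (r - 1) * (1 + ‖y‖) ^ (-r) :=
    (integrable_one_add_norm (by simpa using hr)).const_mul _
  refine hdom.mono' (continuous_one_div_one_add_abs_rpow (by linarith)).aestronglyMeasurable
    (ae_of_all _ fun y => ?_)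
  rw [norm_of_nonneg (by positivity), norm_eq_abs, rpow_neg (by positivity), ← div_eq_mul_inv,
    div_le_div_iff₀ (by positivity) (by positivity), one_mul]
  exact one_add_rpow_le_two_rpow_sub_one_mul (abs_nonneg y) hr.le

lemma mul_one_add_rpow_le {t : ℝ} (ht : 0 ≤ t) (hγ0 : 0 ≤ γ) (hγ1 : γ ≤ 1) (ha : 2 ≤ a) :
    t * (1 + t ^ γ) ≤ 4 * (1 + t ^ a) := by
  have hta : 0 ≤ t ^ a := rpow_nonneg ht a
  rcases le_total t 1 with h | h
  · nlinarith [rpow_le_one ht h hγ0]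
  · have hγ : t ^ γ ≤ t := by simpa using rpow_le_rpow_of_exponent_le h hγ1
    have h2 : t ^ 2 ≤ t ^ a := by simpa using rpow_le_rpow_of_exponent_le h ha
    nlinarith

lemma one_div_mul_one_div_le_add_indicator (hγ : 0 ≤ γ) (ha : 0 ≤ a) (x y : ℝ) :
    1 / ((1 + |x - y| ^ a) * (1 + |y| ^ γ)) ≤
      2 ^ (γ + 1) / (1 + |x| ^ min γ a) * (1 / (1 + |x - y| ^ a)) +
        2 ^ a / (1 + |x| ^ a) *
          (closedBall 0 (|x| / 2)).indicator (fun y => 1 / (1 + |y| ^ γ)) y := by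
  rw [← one_div_mul_one_div]
  by_cases hy : |y| ≤ |x| / 2
  · have hxy : |x| ≤ 2 * |x - y| := by linarith [abs_sub_abs_le_abs_sub x y]
    rw [Set.indicator_of_mem (by simpa using hy)]
    exact le_add_of_nonneg_of_le (by positivity) <| mul_le_mul_of_nonneg_right
      (one_div_one_add_rpow_le_of_le_two_mul ha (abs_nonneg x) hxy) (by positivity)
  · have hxy : |x| ≤ 2 * |y| := by linarith
    rw [Set.indicator_of_notMem (by simpa using hy), mul_zero, add_zero, mul_comm]
    refine mul_le_mul_of_nonneg_right ?_ (by positivity)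
    calc 1 / (1 + |y| ^ γ) ≤ 2 ^ γ * (1 / (1 + |x| ^ γ)) := by
          rw [mul_one_div]; exact one_div_one_add_rpow_le_of_le_two_mul hγ (abs_nonneg x) hxy
      _ ≤ 2 ^ γ * (2 / (1 + |x| ^ min γ a)) := mul_le_mul_of_nonneg_left
          (one_div_one_add_rpow_le_two_div (abs_nonneg x) (le_min hγ ha) (min_le_left γ a))
          (by positivity)
      _ = 2 ^ (γ + 1) / (1 + |x| ^ min γ a) := by rw [rpow_add_one two_ne_zero]; ring

lemma integral_one_div_one_add_abs_rpow_pos {r : ℝ} (hr : 1 < r) :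
    0 < ∫ y : ℝ, 1 / (1 + |y| ^ r) := by
  refine (integral_pos_iff_support_of_nonneg (fun y => by positivity)
    (integrable_one_div_one_add_abs_rpow hr)).2 ?_
  rw [Function.support_eq_univ fun y => by positivity]
  simp

lemma setIntegral_closedBall_one_div_one_add_abs_rpow_le (r : ℝ) (x : ℝ) :
    ∫ y in closedBall 0 (|x| / 2), 1 / (1 + |y| ^ r) ≤ |x| := by
  have hs : volume (closedBall (0 : ℝ) (|x| / 2)) < ⊤ := measure_closedBall_lt_top
  have h := norm_setIntegral_le_of_norm_le_const (f := fun y : ℝ => 1 / (1 + |y| ^ r)) (C := 1)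
    hs fun y _ => by
      rw [norm_of_nonneg (by positivity)]
      exact div_le_one_of_le₀ (by linarith [rpow_nonneg (abs_nonneg y) r]) (by positivity)
  rw [measureReal_def, Real.volume_closedBall, mul_div_cancel₀ _ two_ne_zero,
    ENNReal.toReal_ofReal (abs_nonneg x), one_mul] at h
  exact (le_abs_self _).trans h

lemma exists_setIntegral_closedBall_div_le (hγ : 0 ≤ γ) (ha : 2 ≤ a) :
    ∃ C > 0, ∀ x : ℝ, (∫ y in closedBall 0 (|x| / 2), 1 / (1 + |y| ^ γ)) / (1 + |x| ^ a) ≤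
      C / (1 + |x| ^ min γ a) := by
  rcases le_or_gt γ 1 with hγ1 | hγ1
  · refine ⟨4, by norm_num, fun x => ?_⟩
    rw [min_eq_left (by linarith), div_le_div_iff₀ (by positivity) (by positivity)]
    calc _ ≤ |x| * (1 + |x| ^ γ) := mul_le_mul_of_nonneg_right
            (setIntegral_closedBall_one_div_one_add_abs_rpow_le γ x) (by positivity)
      _ ≤ 4 * (1 + |x| ^ a) := mul_one_add_rpow_le (abs_nonneg x) hγ hγ1 ha
  · refine ⟨2 * ∫ y : ℝ, 1 / (1 + |y| ^ γ),
      mul_pos two_pos (integral_one_div_one_add_abs_rpow_pos hγ1), fun x => ?_⟩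
    have hint := integrable_one_div_one_add_abs_rpow hγ1
    calc _ ≤ (∫ y : ℝ, 1 / (1 + |y| ^ γ)) * (1 / (1 + |x| ^ a)) := by
          rw [mul_one_div]
          exact div_le_div_of_nonneg_right
            (setIntegral_le_integral hint (ae_of_all _ fun y => by positivity)) (by positivity)
      _ ≤ (∫ y : ℝ, 1 / (1 + |y| ^ γ)) * (2 / (1 + |x| ^ min γ a)) :=
          mul_le_mul_of_nonneg_left (one_div_one_add_rpow_le_two_div (abs_nonneg x)
            (le_min hγ (by linarith)) (min_le_right γ a)) (integral_nonneg fun y => by positivity)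
      _ = _ := by ring

theorem integral_one_div_mul_one_add_abs_rpow_le (ha : 2 ≤ a) (hγ : 0 ≤ γ) :
    ∃ c > 0, ∀ x : ℝ, ∫ y, 1 / ((1 + |x - y| ^ a) * (1 + |y| ^ γ)) ≤
      c / (1 + |x| ^ min γ a) := by
  obtain ⟨C, hC, hnear⟩ := exists_setIntegral_closedBall_div_le hγ ha
  set P := ∫ t : ℝ, 1 / (1 + |t| ^ a)
  have hP : Integrable fun t : ℝ => 1 / (1 + |t| ^ a) :=
    integrable_one_div_one_add_abs_rpow (by linarith)
  refine ⟨2 ^ (γ + 1) * P + 2 ^ a * C, by positivity, fun x => ?_⟩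
  have hball : IntegrableOn (fun y : ℝ => 1 / (1 + |y| ^ γ)) (closedBall 0 (|x| / 2)) :=
    (continuous_one_div_one_add_abs_rpow hγ).continuousOn.integrableOn_compact
      (isCompact_closedBall _ _)
  have hfar := (hP.comp_sub_left x).const_mul (2 ^ (γ + 1) / (1 + |x| ^ min γ a))
  have hnear_int := ((integrable_indicator_iff measurableSet_closedBall).2 hball).const_mul
    (2 ^ a / (1 + |x| ^ a))
  calc _ ≤ ∫ y, 2 ^ (γ + 1) / (1 + |x| ^ min γ a) * (1 / (1 + |x - y| ^ a)) +
        2 ^ a / (1 + |x| ^ a) *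
          (closedBall 0 (|x| / 2)).indicator (fun y => 1 / (1 + |y| ^ γ)) y :=
        integral_mono_of_nonneg (ae_of_all _ fun y => by positivity) (hfar.add hnear_int)
          (ae_of_all _ (one_div_mul_one_div_le_add_indicator hγ (by linarith) x))
    _ = 2 ^ (γ + 1) / (1 + |x| ^ min γ a) * P + 2 ^ a *
        ((∫ y in closedBall 0 (|x| / 2), 1 / (1 + |y| ^ γ)) / (1 + |x| ^ a)) := by
      rw [integral_add hfar hnear_int, integral_const_mul, integral_const_mul,
        integral_indicator measurableSet_closedBall, integral_sub_left_eq_self (fun t => 1 / (1 + |t| ^ a))]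
      ring
    _ ≤ 2 ^ (γ + 1) / (1 + |x| ^ min γ a) * P + 2 ^ a * (C / (1 + |x| ^ min γ a)) :=
      add_le_add_right (mul_le_mul_of_nonneg_left (hnear x) (by positivity)) _
    _ = _ := by ring

/-- Convolution-type integral estimate:
`∫_ℝ dy/((1+|x−y|^{n+1})(1+|y|^γ)) ≤ c/(1+|x|^{min(γ,n+1)})`. -/
theorem convolution_decay_estimate (n : ℕ) (hn : 1 ≤ n) (γ : ℝ) (hγ : 0 < γ) :
    ∃ c > (0 : ℝ), ∀ x : ℝ,
      (∫ y : ℝ, 1 / ((1 + |x - y| ^ (n + 1)) * (1 + |y| ^ γ))) ≤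
        c / (1 + |x| ^ min γ ((n : ℝ) + 1)) := by
  obtain ⟨c, hc, h⟩ := integral_one_div_mul_one_add_abs_rpow_le (a := n + 1)
    (by norm_cast; omega) hγ.le
  refine ⟨c, hc, fun x => ?_⟩
  exact_mod_cast h x
end
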